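/- arXiv:2209.10495 — 4 statements merged into one kernel-verified Lean document; each statement's English description precedes it below -/
import Mathlib

section
/- Let k be an even positive integer, ε > 0, and m a positive integer. Let S be the k×k matrix pencil whose (i,j) entry is λ if i + j = k, 1 if i + j = k + 1, (ε/m)·λ if (i,j) = (k,k), and 0 otherwise. Then det S(λ) = (-1)^{k/2} · (1 - (ε/m)·λ^k). -/
/-!
Reversing the order of the rows of `S` produces `1 + λ N + (ε/m) λ E₁ₖ`, with `N` the lower shift
matrix. Expanding along the first row leaves a unitriangular minor and an upper triangular minor
with diagonal `λ`, so this determinant is `1 + (-1)^(k-1) (ε/m) λ^k`. The row reversal has sign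
`(-1)^(k(k-1)/2)`, which is `(-1)^(k/2)` for even `k`.
-/

open Polynomial Equiv

theorem finRotate_mul_revPerm (n : ℕ) :
    finRotate (n + 1) * Fin.revPerm = Perm.decomposeFin.symm (0, Fin.revPerm) := by
  ext i
  refine Fin.cases ?_ (fun x => ?_) i
  · simp
  · simp [Fin.rev_succ]

theorem sign_revPerm (n : ℕ) :
    Perm.sign (Fin.revPerm : Perm (Fin n)) = (-1) ^ n.choose 2 := by
  induction n with
  | zero => rfl
  | succ n ih =>
    have h := congrArg Perm.sign (finRotate_mul_revPerm n)
    rw [map_mul, sign_finRotate, Perm.decomposeFin.symm_sign, if_pos rfl, one_mul, ih,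
      Nat.succ_sub_one] at h
    rw [Nat.choose_succ_succ', Nat.choose_one_right, pow_add, ← h, ← mul_assoc, ← pow_add,
      ← two_mul, pow_mul, Int.units_sq, one_pow, one_mul]

theorem neg_one_pow_choose_two_of_even {k : ℕ} (hk : Even k) :
    (-1 : ℤˣ) ^ k.choose 2 = (-1) ^ (k / 2) := by
  obtain ⟨j, rfl⟩ := hk
  refine neg_one_pow_congr ?_
  rw [Nat.choose_two_right, ← two_mul, Nat.mul_div_cancel_left _ two_pos,
    Nat.mul_assoc, Nat.mul_div_cancel_left _ two_pos, Nat.even_mul]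
  rcases j with _ | j
  · simp
  · have : ¬ Even (2 * (j + 1) - 1) := by rw [Nat.not_even_iff_odd]; exact ⟨j, by omega⟩
    tauto

theorem Matrix.det_of_lowerBidiagonal_add_corner {R : Type*} [CommRing R] {n : ℕ}
    (A : Matrix (Fin (n + 2)) (Fin (n + 2)) R)
    (hA : ∀ i j, A i j ≠ 0 → (i : ℕ) = j ∨ (i : ℕ) = j + 1 ∨ ((i : ℕ) = 0 ∧ (j : ℕ) = n + 1)) :
    A.det = ∏ i, A i i
      + (-1) ^ (n + 1) * A 0 (Fin.last _) * ∏ i : Fin (n + 1), A i.succ i.castSucc := by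
  have hzero : ∀ i j : Fin (n + 2),
      ¬ ((i : ℕ) = j ∨ (i : ℕ) = j + 1 ∨ ((i : ℕ) = 0 ∧ (j : ℕ) = n + 1)) → A i j = 0 :=
    fun i j h => by_contra fun h' => h (hA i j h')
  have hlower : (A.submatrix Fin.succ Fin.succ).IsLowerTriangular := fun i j (hij : i < j) =>
    hzero _ _ (by rw [Fin.val_succ, Fin.val_succ]; omega)
  have hupper : (A.submatrix Fin.succ Fin.castSucc).IsUpperTriangular :=
    fun i j (hij : j < i) => hzero _ _ (by rw [Fin.val_succ, Fin.val_castSucc]; omega)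
  rw [det_succ_row_zero, Fintype.sum_eq_add 0 (Fin.last _) Fin.last_pos.ne]
  · rw [Fin.succAbove_zero, Fin.succAbove_last, det_of_isLowerTriangular _ hlower,
      det_of_isUpperTriangular hupper, Fin.prod_univ_succ (fun i => A i i)]
    simp
  · rintro j ⟨hj0, hjlast⟩
    rw [Ne, Fin.ext_iff, Fin.val_zero] at hj0
    rw [Ne, Fin.ext_iff, Fin.val_last] at hjlast
    rw [hzero 0 j (by rw [Fin.val_zero]; omega), mul_zero, zero_mul]

section

variable {R : Type*} [CommRing R]

/-- The pencil `S` of the statement evaluated at `λ = x`, with `c` in place of `ε / m`. -/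
def perturbedAntiJordan (k : ℕ) (x c : R) : Matrix (Fin k) (Fin k) R :=
  Matrix.of fun i j =>
    if (i.1 + 1) + (j.1 + 1) = k then x
    else if (i.1 + 1) + (j.1 + 1) = k + 1 then 1
    else if i.1 + 1 = k ∧ j.1 + 1 = k then c * x
    else 0

theorem det_submatrix_rev_perturbedAntiJordan (n : ℕ) (x c : R) :
    ((perturbedAntiJordan (n + 2) x c).submatrix Fin.rev id).det
      = 1 + (-1) ^ (n + 1) * (c * x) * x ^ (n + 1) := by
  rw [Matrix.det_of_lowerBidiagonal_add_corner]
  · have hdiag : ∀ i : Fin (n + 2), (n + 1 - i.1) + 1 + (i.1 + 1) = n + 2 + 1 :=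
      fun i => by omega
    have hsubdiag : ∀ i : Fin (n + 1), (n - i.1) + 1 + (i.1 + 1) = n + 2 := fun i => by omega
    simp [perturbedAntiJordan, hdiag, hsubdiag]
  · intro i j h
    simp only [perturbedAntiJordan, Matrix.submatrix_apply, Matrix.of_apply, Fin.val_rev,
      id] at h
    split_ifs at h <;> first | omega | exact absurd rfl h

theorem det_perturbedAntiJordan_of_even {k : ℕ} (hk0 : 0 < k) (hk : Even k) (x c : R) :
    (perturbedAntiJordan k x c).det = (-1) ^ (k / 2) * (1 - c * x ^ k) := by
  obtain ⟨n, rfl⟩ : ∃ n, k = n + 2 := ⟨k - 2, by obtain ⟨j, rfl⟩ := hk; omega⟩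
  have hn : Even n := by simpa [Nat.even_add] using hk
  have hrev : perturbedAntiJordan (n + 2) x c
      = ((perturbedAntiJordan (n + 2) x c).submatrix Fin.rev id).submatrix Fin.revPerm id := by
    ext; simp
  rw [hrev, Matrix.det_permute, sign_revPerm, neg_one_pow_choose_two_of_even hk,
    det_submatrix_rev_perturbedAntiJordan, hn.add_one.neg_one_pow]
  push_cast
  ring

end

theorem stmt_4_general (k : ℕ) (hk : 0 < k) (hke : Even k) (ε : ℝ)
    (m : ℕ)
    (S : Matrix (Fin k) (Fin k) (Polynomial ℂ))
    (hS : S = fun i j =>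
      if (i.1 + 1) + (j.1 + 1) = k then X
      else if (i.1 + 1) + (j.1 + 1) = k + 1 then 1
      else if i.1 + 1 = k ∧ j.1 + 1 = k then C (((ε / m : ℝ)) : ℂ) * X
      else 0) :
    S.det = (-1) ^ (k / 2) * (1 - C (((ε / m : ℝ)) : ℂ) * X ^ k) := by
  rw [show S = perturbedAntiJordan k X (C ((ε / m : ℝ) : ℂ)) from hS]
  exact det_perturbedAntiJordan_of_even hk hke X _

/-- For k even, the determinant of the perturbed Hermitian Jordan-like pencil
S_{(∞,k)}^{(ε,m)} associated with the infinite eigenvalue equals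
(-1)^{k/2}·(1 - (ε/m)·λ^k). -/
theorem stmt_4 (k : ℕ) (hk : 0 < k) (hke : Even k) (ε : ℝ) (hε : 0 < ε)
    (m : ℕ) (hm : 0 < m)
    (S : Matrix (Fin k) (Fin k) (Polynomial ℂ))
    (hS : S = fun i j =>
      if (i.1 + 1) + (j.1 + 1) = k then X
      else if (i.1 + 1) + (j.1 + 1) = k + 1 then 1
      else if i.1 + 1 = k ∧ j.1 + 1 = k then C (((ε / m : ℝ)) : ℂ) * X
      else 0) :
    S.det = (-1) ^ (k / 2) * (1 - C (((ε / m : ℝ)) : ℂ) * X ^ k) :=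
  stmt_4_general k hk hke ε m S hS
end

section
/- Let μ ∈ ℂ with Im(μ) > 0. The set of 2×2 complex matrices X satisfying X* F + F X = 0 and X* G + G X = 0, where F = [[0,1],[1,0]] and G = [[0, μ̄],[μ, 0]], equals { [[x, 0],[0, -x̄]] : x ∈ ℂ }, a real vector space of dimension 2. -/
/-- For μ with Im μ > 0, the solutions of X*F + FX = 0 and X*G + GX = 0 with
F = [[0,1],[1,0]] and G = [[0,μ̄],[μ,0]] are exactly the matrices
[[x,0],[0,-x̄]], x ∈ ℂ (a real vector space of dimension 2). -/
theorem stmt_11 (μ : ℂ) (hμ : 0 < μ.im) :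
    {X : Matrix (Fin 2) (Fin 2) ℂ |
        X.conjTranspose * !![0, 1; 1, 0] + !![0, 1; 1, 0] * X = 0 ∧
        X.conjTranspose * !![0, starRingEnd ℂ μ; μ, 0] +
          !![0, starRingEnd ℂ μ; μ, 0] * X = 0} =
      {X : Matrix (Fin 2) (Fin 2) ℂ |
        ∃ x : ℂ, X = !![x, 0; 0, -(starRingEnd ℂ x)]} := by
  have hμne : μ - starRingEnd ℂ μ ≠ 0 := by
    intro h
    have : (μ - starRingEnd ℂ μ).im = 0 := by rw [h]; simp
    simp [Complex.sub_im, Complex.conj_im] at this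
    linarith
  ext X
  simp only [Set.mem_setOf_eq]
  constructor
  · rintro ⟨h1, h2⟩
    refine ⟨X 0 0, ?_⟩
    have e11 : starRingEnd ℂ (X 1 0) + X 1 0 = 0 := by
      have := congrFun (congrFun h1 0) 0
      simpa [Matrix.mul_apply, Matrix.vecMul, dotProduct, Fin.sum_univ_two,
        Matrix.conjTranspose_apply] using this
    have e12 : starRingEnd ℂ (X 0 0) + X 1 1 = 0 := by
      have := congrFun (congrFun h1 0) 1
      simpa [Matrix.mul_apply, Matrix.vecMul, dotProduct, Fin.sum_univ_two,
        Matrix.conjTranspose_apply] using this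
    have e22 : starRingEnd ℂ (X 0 1) + X 0 1 = 0 := by
      have := congrFun (congrFun h1 1) 1
      simpa [Matrix.mul_apply, Matrix.vecMul, dotProduct, Fin.sum_univ_two,
        Matrix.conjTranspose_apply] using this
    have f11 : starRingEnd ℂ (X 1 0) * μ + starRingEnd ℂ μ * X 1 0 = 0 := by
      have := congrFun (congrFun h2 0) 0
      simpa [Matrix.mul_apply, Matrix.vecMul, dotProduct, Fin.sum_univ_two,
        Matrix.conjTranspose_apply] using this
    have f22 : starRingEnd ℂ (X 0 1) * starRingEnd ℂ μ + μ * X 0 1 = 0 := by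
      have := congrFun (congrFun h2 1) 1
      simpa [Matrix.mul_apply, Matrix.vecMul, dotProduct, Fin.sum_univ_two,
        Matrix.conjTranspose_apply] using this
    have hb : X 0 1 = 0 := by
      have h' : X 0 1 * (μ - starRingEnd ℂ μ) = 0 := by
        have : starRingEnd ℂ (X 0 1) = -(X 0 1) := by linear_combination e22
        rw [this] at f22
        ring_nf
        ring_nf at f22
        linear_combination f22
      exact (mul_eq_zero.1 h').resolve_right hμne
    have hc : X 1 0 = 0 := by
      have h' : X 1 0 * (μ - starRingEnd ℂ μ) = 0 := by
        have : starRingEnd ℂ (X 1 0) = -(X 1 0) := by linear_combination e11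
        rw [this] at f11
        linear_combination -f11
      exact (mul_eq_zero.1 h').resolve_right hμne
    have hd : X 1 1 = -(starRingEnd ℂ (X 0 0)) := by linear_combination e12
    ext i j
    fin_cases i <;> fin_cases j <;> simp [hb, hc, hd]
  · rintro ⟨x, rfl⟩
    constructor <;>
    · ext i j
      fin_cases i <;> fin_cases j <;>
        simp [Matrix.mul_apply, Fin.sum_univ_two, Matrix.conjTranspose_apply] <;> ring
end

section
/- Let F_k and G_k be the k×(k+1) matrices with (F_k)_{i,j} = 1 if j = i+1 and 0 otherwise, and (G_k)_{i,j} = 1 if j = i and 0 otherwise. Then the set of pairs (X₁₁, X₂₂) of complex matrices of sizes (k+1)×(k+1) and k×k respectively satisfying X₂₂* F_k + F_k X₁₁ = 0 and X₂₂* G_k + G_k X₁₁ = 0 equals { (α I_{k+1}, -ᾱ I_k) : α ∈ ℂ }. -/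
/-!
F and G select rows of the identity: F = I[succ, ·] and G = I[castSucc, ·]. For a row selection
E = I[e, ·] by an injection e, the equation C E + E A = 0 says C = -A[e, e] and that the rows
A[e i, ·] vanish off the range of e. Taking C = X₂₂ᴴ, both equations give
A[succ, succ] = A[castSucc, castSucc], so A = X₁₁ is constant along diagonals; its first column
vanishes below the diagonal and its last column above it, so A is scalar, and then
X₂₂ = -(A[castSucc, castSucc])ᴴ.
-/

namespace Matrix

section Shift

variable {R : Type*} {n : ℕ} {A : Matrix (Fin (n + 1)) (Fin (n + 1)) R}

theorem apply_eq_zero_of_lt_of_succ_succ_eq [Zero R]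
    (hshift : ∀ i j : Fin n, A i.succ j.succ = A i.castSucc j.castSucc)
    (hlast : ∀ i : Fin n, A i.castSucc (Fin.last n) = 0) {i j : Fin (n + 1)} (hij : i < j) :
    A i j = 0 := by
  induction j using Fin.reverseInduction generalizing i with
  | last =>
    obtain ⟨i, rfl⟩ := Fin.exists_castSucc_eq.2 hij.ne
    exact hlast i
  | cast j ih =>
    obtain ⟨i, rfl⟩ := Fin.exists_castSucc_eq.2 (hij.trans (Fin.castSucc_lt_last j)).ne
    rw [← hshift]
    exact ih (Fin.succ_lt_succ_iff.2 (Fin.castSucc_lt_castSucc_iff.1 hij))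

theorem apply_eq_zero_of_gt_of_succ_succ_eq [Zero R]
    (hshift : ∀ i j : Fin n, A i.succ j.succ = A i.castSucc j.castSucc)
    (hfirst : ∀ i : Fin n, A i.succ 0 = 0) {i j : Fin (n + 1)} (hji : j < i) :
    A i j = 0 := by
  induction j using Fin.induction generalizing i with
  | zero =>
    obtain ⟨i, rfl⟩ := Fin.exists_succ_eq.2 hji.ne'
    exact hfirst i
  | succ j ih =>
    obtain ⟨i, rfl⟩ := Fin.exists_succ_eq.2 ((Fin.succ_pos j).trans hji).ne'
    rw [hshift]
    exact ih (Fin.castSucc_lt_castSucc_iff.2 (Fin.succ_lt_succ_iff.1 hji))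

theorem apply_self_eq_of_succ_succ_eq
    (hshift : ∀ i j : Fin n, A i.succ j.succ = A i.castSucc j.castSucc) (i : Fin (n + 1)) :
    A i i = A 0 0 := by
  induction i using Fin.induction with
  | zero => rfl
  | succ i ih => rw [hshift]; exact ih

theorem eq_diagonal_of_succ_succ_eq [Zero R]
    (hshift : ∀ i j : Fin n, A i.succ j.succ = A i.castSucc j.castSucc)
    (hfirst : ∀ i : Fin n, A i.succ 0 = 0)
    (hlast : ∀ i : Fin n, A i.castSucc (Fin.last n) = 0) :
    A = diagonal fun _ => A 0 0 := by
  ext i j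
  rcases lt_trichotomy i j with hij | rfl | hji
  · rw [diagonal_apply_ne _ hij.ne, apply_eq_zero_of_lt_of_succ_succ_eq hshift hlast hij]
  · rw [diagonal_apply_eq, apply_self_eq_of_succ_succ_eq hshift]
  · rw [diagonal_apply_ne _ hji.ne', apply_eq_zero_of_gt_of_succ_succ_eq hshift hfirst hji]

end Shift

section Selection

variable {R : Type*} {m n : Type*} [DecidableEq n] {e : m → n}

theorem one_submatrix_id_mul [NonAssocSemiring R] [Fintype n] (e : m → n) (A : Matrix n n R) :
    (1 : Matrix n n R).submatrix e id * A = A.submatrix e id := by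
  simpa using one_submatrix_mul e (Equiv.refl n) A

theorem mul_one_submatrix_id_submatrix [NonAssocSemiring R] [Fintype m] [DecidableEq m]
    (he : Function.Injective e) (C : Matrix m m R) :
    (C * (1 : Matrix n n R).submatrix e id).submatrix id e = C := by
  rw [submatrix_mul _ _ id id e Function.bijective_id, submatrix_submatrix]
  simp [submatrix_one e he]

theorem mul_one_submatrix_id_apply_of_notMem_range [NonAssocSemiring R] [Fintype m]
    (C : Matrix m m R) (i : m) {j : n} (hj : j ∉ Set.range e) :
    (C * (1 : Matrix n n R).submatrix e id) i j = 0 := by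
  rw [mul_apply]
  refine Finset.sum_eq_zero fun l _ => ?_
  rw [submatrix_apply, id, one_apply_ne fun h => hj ⟨l, h⟩, mul_zero]

theorem eq_neg_submatrix_of_mul_add_mul_eq_zero [NonAssocRing R] [Fintype m] [Fintype n]
    [DecidableEq m] {C : Matrix m m R} {A : Matrix n n R} (he : Function.Injective e)
    (h : C * (1 : Matrix n n R).submatrix e id + (1 : Matrix n n R).submatrix e id * A = 0) :
    C = -A.submatrix e e :=
  calc C = (C * (1 : Matrix n n R).submatrix e id).submatrix id e :=
        (mul_one_submatrix_id_submatrix he C).symm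
    _ = (-((1 : Matrix n n R).submatrix e id * A)).submatrix id e := by
        rw [eq_neg_of_add_eq_zero_left h]
    _ = -A.submatrix e e := by
        rw [one_submatrix_id_mul]
        rfl

theorem apply_eq_zero_of_mul_add_mul_eq_zero [NonAssocSemiring R] [Fintype m] [Fintype n]
    {C : Matrix m m R} {A : Matrix n n R}
    (h : C * (1 : Matrix n n R).submatrix e id + (1 : Matrix n n R).submatrix e id * A = 0)
    (i : m) {j : n} (hj : j ∉ Set.range e) : A (e i) j = 0 := by
  have := congrFun (congrFun h i) j
  rwa [add_apply, mul_one_submatrix_id_apply_of_notMem_range C i hj, one_submatrix_id_mul,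
    zero_add] at this

end Selection

end Matrix

open Matrix

/-- With F_k and G_k the k×(k+1) shift matrices, the solutions of
X₂₂*F + F·X₁₁ = 0, X₂₂*G + G·X₁₁ = 0 are exactly the pairs
(α·I_{k+1}, -ᾱ·I_k), α ∈ ℂ. -/
theorem stmt_15 (k : ℕ)
    (F G : Matrix (Fin k) (Fin (k + 1)) ℂ)
    (hF : F = fun i j => if j.1 = i.1 + 1 then 1 else 0)
    (hG : G = fun i j => if j.1 = i.1 then 1 else 0) :
    {p : Matrix (Fin (k + 1)) (Fin (k + 1)) ℂ × Matrix (Fin k) (Fin k) ℂ |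
        p.2.conjTranspose * F + F * p.1 = 0 ∧
        p.2.conjTranspose * G + G * p.1 = 0} =
      {p | ∃ α : ℂ, p = (α • (1 : Matrix (Fin (k + 1)) (Fin (k + 1)) ℂ),
        (-(starRingEnd ℂ α)) • (1 : Matrix (Fin k) (Fin k) ℂ))} := by
  obtain rfl : F = (1 : Matrix (Fin (k + 1)) (Fin (k + 1)) ℂ).submatrix Fin.succ id := by
    ext i j
    simp [hF, one_apply, Fin.ext_iff, eq_comm]
  obtain rfl : G = (1 : Matrix (Fin (k + 1)) (Fin (k + 1)) ℂ).submatrix Fin.castSucc id := by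
    ext i j
    simp [hG, one_apply, Fin.ext_iff, eq_comm]
  ext ⟨A, B⟩
  refine ⟨fun ⟨hsucc, hcast⟩ => ?_, ?_⟩
  · dsimp only at hsucc hcast ⊢
    have hBsucc := eq_neg_submatrix_of_mul_add_mul_eq_zero (Fin.succ_injective _) hsucc
    have hBcast := eq_neg_submatrix_of_mul_add_mul_eq_zero (Fin.castSucc_injective _) hcast
    obtain ⟨α, rfl⟩ : ∃ α : ℂ, A = α • 1 := by
      refine ⟨A 0 0, ?_⟩
      rw [smul_one_eq_diagonal]
      refine eq_diagonal_of_succ_succ_eq (fun i j => ?_) (fun i => ?_) (fun i => ?_)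
      · exact congr_fun₂ (neg_inj.1 (hBsucc.symm.trans hBcast)) i j
      · exact apply_eq_zero_of_mul_add_mul_eq_zero hsucc i (by simp)
      · exact apply_eq_zero_of_mul_add_mul_eq_zero hcast i (by simp)
    refine ⟨α, Prod.ext rfl ?_⟩
    rw [← conjTranspose_conjTranspose B, hBcast]
    ext i j
    by_cases hij : i = j <;> simp [one_apply, hij, Ne.symm]
  · rintro ⟨α, hp⟩
    obtain ⟨rfl, rfl⟩ := Prod.mk.inj hp
    simp [conjTranspose_smul]
end

section
/- Let F_k, G_k be as above (k×(k+1) shift matrices). The set of k×(k+1) complex matrices X₂₁ satisfying X₂₁* F_k + F_k^T X₂₁ = 0 and X₂₁* G_k + G_k^T X₂₁ = 0 is {0}, i.e., the zero matrix is the only solution. -/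
/-!
Write `G_k = rectId k = [I | 0]` and `F_k = rectShift k = [0 | I]`. Taking conjugate transposes,
the hypotheses say that `Fᵀ X` and `Gᵀ X` are skew-Hermitian. Extend `X` by zero to
`Y : ℕ → ℕ → R`: then `Gᵀ X` is `Y` and `Fᵀ X` is `Y` moved down one row. The two skew-symmetries combine to
`Y i (j + 1) = Y (i + 1) j`, so `Y` is constant along antidiagonals, while the zero top row of
the skew-Hermitian `Fᵀ X` makes the first column of `Y` vanish. Hence `Y = 0`.
-/

open Matrix

variable {R : Type*}

theorem Fin.sum_ite_val_eq [AddCommMonoid R] {k : ℕ} (v : Fin k → R) (m : ℕ) :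
    ∑ l : Fin k, (if m = l then v l else 0) = if h : m < k then v ⟨m, h⟩ else 0 := by
  split_ifs with h
  · rw [Fintype.sum_eq_single ⟨m, h⟩ fun l hl => if_neg fun e => hl (Fin.ext e.symm),
      if_pos rfl]
  · exact Finset.sum_eq_zero fun l _ => if_neg (by omega)

theorem eq_zero_of_shift_eq_of_col_zero {M : Type*} [Zero M] (f : ℕ → ℕ → M)
    (hshift : ∀ i j, f i (j + 1) = f (i + 1) j) (hcol : ∀ i, f i 0 = 0) : f = 0 := by
  funext i j
  induction j generalizing i with
  | zero => exact hcol i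
  | succ j ih => rw [hshift, ih]; rfl

namespace Matrix

def natExtend [Zero R] {m n : ℕ} (X : Matrix (Fin m) (Fin n) R) (i j : ℕ) : R :=
  if h : i < m ∧ j < n then X ⟨i, h.1⟩ ⟨j, h.2⟩ else 0

def rectId (k : ℕ) [Zero R] [One R] : Matrix (Fin k) (Fin (k + 1)) R :=
  of fun i j => if (j : ℕ) = i then 1 else 0

def rectShift (k : ℕ) [Zero R] [One R] : Matrix (Fin k) (Fin (k + 1)) R :=
  of fun i j => if (j : ℕ) = i + 1 then 1 else 0

section natExtend

variable {m n : ℕ}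

theorem natExtend_val [Zero R] (X : Matrix (Fin m) (Fin n) R) (i : Fin m) (j : Fin n) :
    natExtend X i j = X i j :=
  dif_pos ⟨i.2, j.2⟩

theorem natExtend_eq_neg_star [AddGroup R] [StarAddMonoid R] {A : Matrix (Fin n) (Fin n) R}
    (hA : Aᴴ = -A) (i j : ℕ) : natExtend A i j = -star (natExtend A j i) := by
  unfold natExtend
  by_cases h : i < n ∧ j < n
  · rw [dif_pos h, dif_pos h.symm, ← conjTranspose_apply, hA, neg_apply, neg_neg]
  · rw [dif_neg h, dif_neg (by tauto), star_zero, neg_zero]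

end natExtend

variable {k : ℕ}

theorem conjTranspose_transpose_rectId [Semiring R] [StarRing R] :
    (rectId k : Matrix (Fin k) (Fin (k + 1)) R)ᵀᴴ = rectId k := by
  ext i j
  simp [rectId, apply_ite star]

theorem conjTranspose_transpose_rectShift [Semiring R] [StarRing R] :
    (rectShift k : Matrix (Fin k) (Fin (k + 1)) R)ᵀᴴ = rectShift k := by
  ext i j
  simp [rectShift, apply_ite star]

theorem natExtend_rectId_transpose_mul [NonAssocSemiring R] (X : Matrix (Fin k) (Fin (k + 1)) R) :
    natExtend ((rectId k : Matrix (Fin k) (Fin (k + 1)) R)ᵀ * X) = natExtend X := by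
  funext i j
  unfold natExtend
  by_cases h : i < k + 1 ∧ j < k + 1
  · simp [dif_pos h, mul_apply, rectId, Fin.sum_ite_val_eq, h.2]
  · rw [dif_neg h, dif_neg (by omega)]

theorem natExtend_rectShift_transpose_mul_succ [NonAssocSemiring R]
    (X : Matrix (Fin k) (Fin (k + 1)) R) (i j : ℕ) :
    natExtend ((rectShift k : Matrix (Fin k) (Fin (k + 1)) R)ᵀ * X) (i + 1) j =
      natExtend X i j := by
  unfold natExtend
  by_cases h : i + 1 < k + 1 ∧ j < k + 1
  · simp [dif_pos h, mul_apply, rectShift, Fin.sum_ite_val_eq, h.2]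
  · rw [dif_neg h, dif_neg (by omega)]

theorem natExtend_rectShift_transpose_mul_zero [NonAssocSemiring R]
    (X : Matrix (Fin k) (Fin (k + 1)) R) (j : ℕ) :
    natExtend ((rectShift k : Matrix (Fin k) (Fin (k + 1)) R)ᵀ * X) 0 j = 0 := by
  unfold natExtend
  split_ifs
  · simp [mul_apply, rectShift]
  · rfl

theorem eq_zero_of_rectShift_rectId_skew [Ring R] [StarRing R]
    {X : Matrix (Fin k) (Fin (k + 1)) R}
    (hF : ((rectShift k : Matrix (Fin k) (Fin (k + 1)) R)ᵀ * X)ᴴ = -((rectShift k)ᵀ * X))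
    (hG : ((rectId k : Matrix (Fin k) (Fin (k + 1)) R)ᵀ * X)ᴴ = -((rectId k)ᵀ * X)) :
    X = 0 := by
  have hFX := natExtend_eq_neg_star hF
  have hGX := natExtend_eq_neg_star hG
  rw [natExtend_rectId_transpose_mul] at hGX
  have hshift : ∀ i j, natExtend X i (j + 1) = natExtend X (i + 1) j := fun i j => by
    rw [← natExtend_rectShift_transpose_mul_succ, hFX, natExtend_rectShift_transpose_mul_succ,
      hGX j, star_neg, star_star, neg_neg]
  have hcol : ∀ i, natExtend X i 0 = 0 := fun i => by
    rw [← natExtend_rectShift_transpose_mul_succ, hFX, natExtend_rectShift_transpose_mul_zero,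
      star_zero, neg_zero]
  ext i j
  rw [← natExtend_val X i j, eq_zero_of_shift_eq_of_col_zero _ hshift hcol]
  rfl

end Matrix

/-- With F_k and G_k the k×(k+1) shift matrices, the only k×(k+1) matrix X
satisfying X*F + Fᵀ·X = 0 and X*G + Gᵀ·X = 0 is X = 0. -/
theorem stmt_16 (k : ℕ)
    (F G : Matrix (Fin k) (Fin (k + 1)) ℂ)
    (hF : F = fun i j => if j.1 = i.1 + 1 then 1 else 0)
    (hG : G = fun i j => if j.1 = i.1 then 1 else 0)
    (X : Matrix (Fin k) (Fin (k + 1)) ℂ)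
    (h1 : X.conjTranspose * F + F.transpose * X = 0)
    (h2 : X.conjTranspose * G + G.transpose * X = 0) :
    X = 0 := by
  obtain rfl : F = rectShift k := hF
  obtain rfl : G = rectId k := hG
  refine eq_zero_of_rectShift_rectId_skew ?_ ?_
  · rw [conjTranspose_mul, conjTranspose_transpose_rectShift]
    exact eq_neg_of_add_eq_zero_left h1
  · rw [conjTranspose_mul, conjTranspose_transpose_rectId]
    exact eq_neg_of_add_eq_zero_left h2
end
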